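/- Let n ≥ 1 and for each i = 1, …, n let a_i = (a_{i,1}, …, a_{i,n}) ∈ ℝⁿ satisfy 0 < ∑_{j=1}^{n} |a_{i,j}| < 1, and let A_i be the companion matrix of a_i. Then ‖A_n A_{n−1} ⋯ A_1‖_∞ < 1. -/
import Mathlib


open Finset

/-- The companion matrix of a vector `a = (a 0, …, a (n-1))` (representing
`(a_{1}, …, a_{n})` in 1-indexed notation): superdiagonal of ones, last row
`(-a_n, -a_{n-1}, …, -a_1)`. -/
def companion (n : ℕ) (a : Fin n → ℝ) : Matrix (Fin n) (Fin n) ℝ :=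
  Matrix.of fun j k =>
    if (j : ℕ) = n - 1 then -a k.rev
    else if (k : ℕ) = (j : ℕ) + 1 then 1 else 0

/-- `prodDesc A k = A k * A (k-1) * ⋯ * A 1`. -/
def prodDesc {m : ℕ} (A : ℕ → Matrix (Fin m) (Fin m) ℝ) : ℕ → Matrix (Fin m) (Fin m) ℝ
  | 0 => 1
  | k + 1 => A (k + 1) * prodDesc A k

/-- The operator norm induced by the ℓ∞ norm: the maximum over rows of the ℓ¹ norm of
the row. -/
noncomputable def rowSumNorm {m : ℕ} (M : Matrix (Fin m) (Fin m) ℝ) : ℝ :=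
  ⨆ j : Fin m, ∑ k : Fin m, |M j k|

lemma key_stmt_13 (n : ℕ) (a : ℕ → Fin n → ℝ)
    (ha : ∀ i : ℕ, 1 ≤ i → i ≤ n →
      0 < ∑ j : Fin n, |a i j| ∧ ∑ j : Fin n, |a i j| < 1) :
    ∀ k : ℕ, k ≤ n → ∀ j : Fin n,
      (∑ c : Fin n, |prodDesc (fun i => companion n (a i)) k j c| ≤ 1) ∧
      (n ≤ (j : ℕ) + k → ∑ c : Fin n, |prodDesc (fun i => companion n (a i)) k j c| < 1) := by
  intro k
  induction k with
  | zero =>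
    intro _ j
    constructor
    · simp [prodDesc, Matrix.one_apply, apply_ite abs]
    · intro h; exact absurd h (by simp [j.isLt])
  | succ k ih =>
    intro hk j
    have hk' : k ≤ n := Nat.le_of_succ_le hk
    set M := prodDesc (fun i => companion n (a i)) k with hM
    have hP : prodDesc (fun i => companion n (a i)) (k + 1) = companion n (a (k + 1)) * M := rfl
    by_cases hj : (j : ℕ) = n - 1
    · -- last row
      have hent : ∀ c : Fin n, (companion n (a (k+1)) * M) j c
          = ∑ t : Fin n, -a (k+1) t.rev * M t c := by
        intro c
        simp [Matrix.mul_apply, companion, hj]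
      have hsum : ∑ c : Fin n, |(companion n (a (k+1)) * M) j c|
          ≤ ∑ t : Fin n, |a (k+1) t| := by
        calc ∑ c : Fin n, |(companion n (a (k+1)) * M) j c|
            ≤ ∑ c : Fin n, ∑ t : Fin n, |a (k+1) t.rev| * |M t c| := by
              apply Finset.sum_le_sum
              intro c _
              rw [hent c]
              refine (Finset.abs_sum_le_sum_abs _ _).trans ?_
              apply Finset.sum_le_sum
              intro t _
              rw [abs_mul, abs_neg]
          _ = ∑ t : Fin n, |a (k+1) t.rev| * ∑ c : Fin n, |M t c| := by
              rw [Finset.sum_comm]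
              simp [Finset.mul_sum]
          _ ≤ ∑ t : Fin n, |a (k+1) t.rev| * 1 := by
              apply Finset.sum_le_sum
              intro t _
              exact mul_le_mul_of_nonneg_left ((ih hk' t).1) (abs_nonneg _)
          _ = ∑ t : Fin n, |a (k+1) t.rev| := by simp
          _ = ∑ t : Fin n, |a (k+1) t| := by
              exact Fintype.sum_equiv (Fin.revPerm) _ _ (fun t => rfl)
      have hlt : ∑ c : Fin n, |(companion n (a (k+1)) * M) j c| < 1 :=
        hsum.trans_lt ((ha (k+1) (Nat.le_add_left 1 k) hk).2)
      rw [hP]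
      exact ⟨hlt.le, fun _ => hlt⟩
    · -- shifted row
      have hjlt : (j : ℕ) + 1 < n := by
        have := j.isLt; omega
      set j' : Fin n := ⟨(j : ℕ) + 1, hjlt⟩ with hj'
      have hent : ∀ c : Fin n, (companion n (a (k+1)) * M) j c = M j' c := by
        intro c
        rw [Matrix.mul_apply]
        rw [Finset.sum_eq_single j']
        · simp [companion, hj, hj']
        · intro t _ ht
          have : (t : ℕ) ≠ (j : ℕ) + 1 := by
            intro h; apply ht; exact Fin.ext h
          simp [companion, hj, this]
        · simp
      rw [hP]
      simp only [hent]
      refine ⟨(ih hk' j').1, fun h => (ih hk' j').2 ?_⟩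
      simp only [hj']
      omega

/-- First part of Lemma 5 of the paper (Appendix F): a product of `n` companion
matrices whose coefficient vectors have ℓ¹ norm strictly between 0 and 1 has
ℓ∞-operator norm strictly less than 1. -/
theorem stmt_13 (n : ℕ) (hn : 1 ≤ n) (a : ℕ → Fin n → ℝ)
    (ha : ∀ i : ℕ, 1 ≤ i → i ≤ n →
      0 < ∑ j : Fin n, |a i j| ∧ ∑ j : Fin n, |a i j| < 1) :
    rowSumNorm (prodDesc (fun i => companion n (a i)) n) < 1 := by
  have hkey := key_stmt_13 n a ha n le_rfl
  have hlt : ∀ j : Fin n, ∑ c : Fin n, |prodDesc (fun i => companion n (a i)) n j c| < 1 :=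
    fun j => (hkey j).2 (Nat.le_add_left n _)
  have hne : Nonempty (Fin n) := ⟨⟨0, hn⟩⟩
  obtain ⟨j0, hj0⟩ := Finite.exists_max
    (fun j : Fin n => ∑ c : Fin n, |prodDesc (fun i => companion n (a i)) n j c|)
  calc rowSumNorm (prodDesc (fun i => companion n (a i)) n)
      ≤ ∑ c : Fin n, |prodDesc (fun i => companion n (a i)) n j0 c| := ciSup_le hj0
    _ < 1 := hlt j0
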